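/- The extreme point v(m,U,V) of QSTAB(G) for the 2×N unicasts-and-broadcast conflict graph can be written as a nonnegative linear combination of incidence vectors of stable sets of G with total coefficient 1 + 1/|U| - 1/|U|^2 ≤ 5/4; hence the fractional weighted chromatic number of G with weights v(m,U,V) is at most 1 + 1/|U| - 1/|U|^2 ≤ 1.25 (using |U| ≥ 2). -/

import Mathlib

/-- Vertices of the enhanced conflict graph of the `2 × N` unicasts-and-broadcast
pattern: `u1 j`, `b1 j` are the unicast and broadcast subflows from input 1 and
`u2 j` the unicasts from input 2. -/
inductive V3 (N : ℕ) where
  | u1 : Fin N → V3 N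
  | b1 : Fin N → V3 N
  | u2 : Fin N → V3 N
deriving DecidableEq

/-- The enhanced conflict graph: `u1 j ~ u1 k`, `b1 j ~ u1 k` (input-1
conflicts), `u2 j ~ u2 k` (input-2 conflicts), the `b1 j` pairwise nonadjacent,
and `u1 j ~ u2 j`, `b1 j ~ u2 j` (output conflicts). -/
def G3 (N : ℕ) : SimpleGraph (V3 N) where
  Adj a b := a ≠ b ∧
    (match a, b with
      | .u1 _, .u1 _ => True
      | .u1 _, .b1 _ => True
      | .b1 _, .u1 _ => True
      | .b1 _, .b1 _ => False
      | .u2 _, .u2 _ => True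
      | .u1 j, .u2 k => j = k
      | .u2 j, .u1 k => j = k
      | .b1 j, .u2 k => j = k
      | .u2 j, .b1 k => j = k)
  symm := by
    constructor
    rintro (j | j | j) (k | k | k) ⟨hne, h⟩ <;> exact ⟨hne.symm, by simp_all⟩
  loopless := by constructor; rintro (j | j | j) ⟨hne, _⟩ <;> exact hne rfl

/-- The weight vector `v(m, U, V)` on the vertices of `G3 N`. -/
noncomputable def wV3 (N : ℕ) (m : Fin N) (U Vt : Finset (Fin N)) : V3 N → ℝ
  | .u1 j => if j = m then ((U.card : ℝ))⁻¹ else 0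
  | .b1 j => if j ∈ Vt then 1 - ((U.card : ℝ))⁻¹ else 0
  | .u2 j => if j ∈ U then ((U.card : ℝ))⁻¹ else 0

/-!
Write `c = 1/|U|`. The weight `v(m, U, V)` is the combination of the stable sets
`{u1 m, u2 j}` (`j ∈ U`) with coefficient `c²`, the sets `{u2 j} ∪ {b1 k : k ∈ V, k ≠ j}`
(`j ∈ U`) with coefficient `c - c²`, and `{b1 k : k ∈ U}` with coefficient `c - c²`.
Since `U ⊆ V`, each `b1 k` with `k ∈ V` lies in exactly `|U|` of the last two kinds of sets and
so receives `|U| (c - c²) = 1 - c`. The total coefficient is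
`|U| c² + (|U| + 1)(c - c²) = 1 + c - c²`, which is at most `5/4` since `(c - 1/2)² ≥ 0`.
-/

open Finset

section StableDecomposition

variable {V : Type*} [DecidableEq V] (G : SimpleGraph V)

def HasStableDecomposition (w : V → ℝ) (t : ℝ) : Prop :=
  ∃ (k : ℕ) (S : Fin k → Finset V) (lam : Fin k → ℝ),
    (∀ i, 0 ≤ lam i) ∧
    (∀ i, ∀ a ∈ S i, ∀ b ∈ S i, ¬ G.Adj a b) ∧
    (∑ i, lam i = t) ∧
    (∀ v, ∑ i, lam i * (if v ∈ S i then (1 : ℝ) else 0) = w v)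

variable {G}

theorem hasStableDecomposition_zero : HasStableDecomposition G 0 0 :=
  ⟨0, Fin.elim0, Fin.elim0, Fin.rec0, Fin.rec0, by simp, by simp⟩

theorem hasStableDecomposition_indicator {s : Finset V} (hs : G.IsIndepSet s) {c : ℝ}
    (hc : 0 ≤ c) : HasStableDecomposition G (fun v ↦ c * if v ∈ s then 1 else 0) c := by
  refine ⟨1, fun _ ↦ s, fun _ ↦ c, fun _ ↦ hc, fun _ a ha b hb hab ↦ ?_, by simp,
    by simp⟩
  exact hs ha hb (G.ne_of_adj hab) hab

theorem HasStableDecomposition.add {w₁ w₂ : V → ℝ} {t₁ t₂ : ℝ}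
    (h₁ : HasStableDecomposition G w₁ t₁) (h₂ : HasStableDecomposition G w₂ t₂) :
    HasStableDecomposition G (w₁ + w₂) (t₁ + t₂) := by
  obtain ⟨k₁, S₁, lam₁, hlam₁, hS₁, ht₁, hw₁⟩ := h₁
  obtain ⟨k₂, S₂, lam₂, hlam₂, hS₂, ht₂, hw₂⟩ := h₂
  refine ⟨k₁ + k₂, Fin.append S₁ S₂, Fin.append lam₁ lam₂, ?_, ?_, ?_, fun v ↦ ?_⟩
  · exact Fin.addCases (by simpa using hlam₁) (by simpa using hlam₂)
  · exact Fin.addCases (by simpa using hS₁) (by simpa using hS₂)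
  · simp [Fin.sum_univ_add, ht₁, ht₂]
  · simp only [Fin.sum_univ_add, Fin.append_left, Fin.append_right, hw₁, hw₂, Pi.add_apply]

theorem HasStableDecomposition.sum {ι : Type*} {J : Finset ι} {w : ι → V → ℝ}
    {t : ι → ℝ} (h : ∀ j ∈ J, HasStableDecomposition G (w j) (t j)) :
    HasStableDecomposition G (∑ j ∈ J, w j) (∑ j ∈ J, t j) := by
  classical
  induction J using Finset.induction_on with
  | empty => exact hasStableDecomposition_zero
  | insert j J hj ih =>
    rw [sum_insert hj, sum_insert hj]
    exact (h j (mem_insert_self j J)).add (ih fun i hi ↦ h i (mem_insert_of_mem hi))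

end StableDecomposition

theorem Finset.card_erase_add_ite {α : Type*} [DecidableEq α] (s : Finset α) (a : α) :
    (s.erase a).card + (if a ∈ s then 1 else 0) = s.card := by
  split_ifs with ha
  · exact card_erase_add_one ha
  · rw [erase_eq_of_notMem ha, add_zero]

namespace V3

variable {N : ℕ}

def unicastPair (m j : Fin N) : Finset (V3 N) := {u1 m, u2 j}

def unicastWithBroadcasts (Vt : Finset (Fin N)) (j : Fin N) : Finset (V3 N) :=
  insert (u2 j) ((Vt.erase j).image b1)

def broadcasts (s : Finset (Fin N)) : Finset (V3 N) := s.image b1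

theorem isIndepSet_unicastPair {m j : Fin N} (h : m ≠ j) :
    (G3 N).IsIndepSet (unicastPair m j : Set (V3 N)) := by
  simp only [unicastPair, coe_insert, coe_singleton]
  rintro a (rfl | rfl) b (rfl | rfl) - ⟨hne, hadj⟩ <;> simp_all

theorem isIndepSet_unicastWithBroadcasts (Vt : Finset (Fin N)) (j : Fin N) :
    (G3 N).IsIndepSet (unicastWithBroadcasts Vt j : Set (V3 N)) := by
  simp only [unicastWithBroadcasts, coe_insert, coe_image, coe_erase]
  rintro a (rfl | ⟨k, ⟨-, hk⟩, rfl⟩) b (rfl | ⟨l, ⟨-, hl⟩, rfl⟩) hne hadj <;>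
    simp_all [G3]

theorem isIndepSet_broadcasts (s : Finset (Fin N)) :
    (G3 N).IsIndepSet (broadcasts s : Set (V3 N)) := by
  simp only [broadcasts, coe_image]
  rintro _ ⟨k, -, rfl⟩ _ ⟨l, -, rfl⟩ - ⟨-, hadj⟩
  exact hadj

theorem sum_b1_mem_unicastWithBroadcasts_add {U Vt : Finset (Fin N)} (hUV : U ⊆ Vt) (i : Fin N) :
    (∑ j ∈ U, if b1 i ∈ unicastWithBroadcasts Vt j then (1 : ℝ) else 0) +
      (if b1 i ∈ broadcasts U then 1 else 0) = if i ∈ Vt then (U.card : ℝ) else 0 := by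
  have hb : b1 i ∈ broadcasts U ↔ i ∈ U := by simp [broadcasts]
  by_cases hi : i ∈ Vt
  · have hfilter : U.filter (fun j ↦ b1 i ∈ unicastWithBroadcasts Vt j) = U.erase i := by
      ext j
      simp [unicastWithBroadcasts, hi, and_comm, eq_comm]
    rw [sum_boole, hfilter, if_congr hb rfl rfl, if_pos hi]
    exact_mod_cast card_erase_add_ite U i
  · have hiU : i ∉ U := fun h ↦ hi (hUV h)
    simp [unicastWithBroadcasts, broadcasts, hi, hiU]

end V3

theorem wV3_eq_sum {N : ℕ} {m : Fin N} {U Vt : Finset (Fin N)} (hU : U.card ≠ 0)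
    (hUV : U ⊆ Vt) (v : V3 N) :
    wV3 N m U Vt v =
      ∑ j ∈ U, (U.card : ℝ)⁻¹ ^ 2 * (if v ∈ V3.unicastPair m j then 1 else 0) +
      ∑ j ∈ U, ((U.card : ℝ)⁻¹ - (U.card : ℝ)⁻¹ ^ 2) *
        (if v ∈ V3.unicastWithBroadcasts Vt j then 1 else 0) +
      ((U.card : ℝ)⁻¹ - (U.card : ℝ)⁻¹ ^ 2) *
        (if v ∈ V3.broadcasts U then 1 else 0) := by
  have hnc : (U.card : ℝ) * (U.card : ℝ)⁻¹ = 1 := mul_inv_cancel₀ (Nat.cast_ne_zero.mpr hU)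
  rcases v with i | i | i
  · have hsq : (U.card : ℝ) * ((U.card : ℝ) ^ 2)⁻¹ = (U.card : ℝ)⁻¹ := by
      rw [sq, mul_inv, ← mul_assoc, hnc, one_mul]
    simp [wV3, V3.unicastPair, V3.unicastWithBroadcasts, V3.broadcasts, hsq]
  · have hpair : ∀ j, V3.b1 i ∉ V3.unicastPair m j := by simp [V3.unicastPair]
    simp only [wV3, hpair, if_false, mul_zero, sum_const_zero, zero_add, ← mul_sum, ← mul_add,
      V3.sum_b1_mem_unicastWithBroadcasts_add hUV i]
    split_ifs
    · linear_combination ((U.card : ℝ)⁻¹ - 1) * hnc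
    · rw [mul_zero]
  · by_cases hi : i ∈ U <;>
      simp [wV3, V3.unicastPair, V3.unicastWithBroadcasts, V3.broadcasts, hi]

theorem stmt19_general (N : ℕ) (U Vt : Finset (Fin N)) (m : Fin N)
    (h2 : 2 ≤ U.card) (hm : m ∉ U) (hUV : U ⊆ Vt) :
    (∃ (k : ℕ) (S : Fin k → Finset (V3 N)) (lam : Fin k → ℝ),
      (∀ i, 0 ≤ lam i) ∧
      (∀ i, ∀ a ∈ S i, ∀ b ∈ S i, ¬ (G3 N).Adj a b) ∧
      (∑ i, lam i = 1 + ((U.card : ℝ))⁻¹ - (((U.card : ℝ))⁻¹) ^ 2) ∧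
      (∀ v : V3 N,
        ∑ i, lam i * (if v ∈ S i then (1 : ℝ) else 0) = wV3 N m U Vt v)) ∧
    1 + ((U.card : ℝ))⁻¹ - (((U.card : ℝ))⁻¹) ^ 2 ≤ 5 / 4 := by
  have hU : U.card ≠ 0 := by omega
  have hnc : (U.card : ℝ) * (U.card : ℝ)⁻¹ = 1 := mul_inv_cancel₀ (Nat.cast_ne_zero.mpr hU)
  have hc : 0 ≤ (U.card : ℝ)⁻¹ - (U.card : ℝ)⁻¹ ^ 2 :=
    sub_nonneg.mpr <| pow_le_of_le_one (by positivity)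
      (inv_le_one_of_one_le₀ (mod_cast Nat.one_le_iff_ne_zero.mpr hU)) two_ne_zero
  have hdec := ((HasStableDecomposition.sum fun j hj ↦ hasStableDecomposition_indicator
      (V3.isIndepSet_unicastPair (ne_of_mem_of_not_mem hj hm).symm)
      (sq_nonneg (U.card : ℝ)⁻¹)).add
    (HasStableDecomposition.sum (J := U) fun j _ ↦ hasStableDecomposition_indicator
      (V3.isIndepSet_unicastWithBroadcasts Vt j) hc)).add
    (hasStableDecomposition_indicator (V3.isIndepSet_broadcasts U) hc)
  have hwt : HasStableDecomposition (G3 N) (wV3 N m U Vt)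
      (1 + (U.card : ℝ)⁻¹ - (U.card : ℝ)⁻¹ ^ 2) := by
    convert hdec using 1
    · funext v
      simp only [wV3_eq_sum hU hUV v, Pi.add_apply, Finset.sum_apply]
    · simp only [sum_const, nsmul_eq_mul]
      linear_combination -hnc
  exact ⟨hwt, by nlinarith [sq_nonneg ((U.card : ℝ)⁻¹ - 1 / 2)]⟩

/-- The extreme point `v(m, U, V)` of `QSTAB(G)` can be written as a nonnegative
combination of incidence vectors of stable sets of `G` with total coefficient
`1 + 1/|U| - 1/|U|² ≤ 5/4`; hence the fractional weighted chromatic number of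
`G` with these weights is at most `1 + 1/|U| - 1/|U|² ≤ 1.25`. -/
theorem stmt19 (N : ℕ) (U Vt : Finset (Fin N)) (m : Fin N)
    (h2 : 2 ≤ U.card) (hle : U.card ≤ N - 1) (hm : m ∉ U) (hUV : U ⊆ Vt) :
    (∃ (k : ℕ) (S : Fin k → Finset (V3 N)) (lam : Fin k → ℝ),
      (∀ i, 0 ≤ lam i) ∧
      (∀ i, ∀ a ∈ S i, ∀ b ∈ S i, ¬ (G3 N).Adj a b) ∧
      (∑ i, lam i = 1 + ((U.card : ℝ))⁻¹ - (((U.card : ℝ))⁻¹) ^ 2) ∧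
      (∀ v : V3 N,
        ∑ i, lam i * (if v ∈ S i then (1 : ℝ) else 0) = wV3 N m U Vt v)) ∧
    1 + ((U.card : ℝ))⁻¹ - (((U.card : ℝ))⁻¹) ^ 2 ≤ 5 / 4 :=
  stmt19_general N U Vt m h2 hm hUV
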